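/- Let G be a finite simple graph and L ≥ 3 an integer. If G contains two distinct cycles C_1 and C_2, each of length at most L, which share at least one vertex, then there exists a set S of vertices of G with |S| ≤ 2L such that the number of edges of G with both endpoints in S is at least |S| + 1. -/

import Mathlib

set_option linter.unusedSectionVars false

section Aux

open SimpleGraph

variable {V : Type*} [DecidableEq V] {G : SimpleGraph V}

private lemma count_cons' (x y : V) (l : List V) :
    List.count x (y :: l) = List.count x l + (if x = y then 1 else 0) := by
  rw [List.count_cons]
  by_cases h : x = y
  · subst h; simp
  · simp [beq_iff_eq, h, Ne.symm h]

/-- Any vertex in the first edge of a walk story. -/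
private lemma head_edge_mem {u w : V} (p : G.Walk u w) {e : Sym2 V} (he : e ∈ p.edges.head?) :
    u ∈ e ∧ e ∈ p.edges := by
  cases p with
  | nil => simp at he
  | cons h q =>
    rw [Walk.edges_cons] at he ⊢
    simp only [List.head?_cons, Option.mem_some_iff] at he
    subst he
    simp

private lemma mem_support_of_mem_edges' {u w : V} (p : G.Walk u w) {e : Sym2 V}
    (he : e ∈ p.edges) {y : V} (hy : y ∈ e) : y ∈ p.support := by
  induction e using Sym2.ind with
  | _ a b =>
    rcases Sym2.mem_iff.mp hy with rfl | rfl
    · exact p.fst_mem_support_of_mem_edges he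
    · exact p.snd_mem_support_of_mem_edges he

/-- Propagation of membership in `F` along a walk, starting from the first edge. -/
private lemma prop_along {u w : V} (p : G.Walk u w) (F : Finset (Sym2 V))
    (hstep : ∀ e ∈ F, ∀ y, y ∈ e → ∀ e' ∈ p.edges, y ∈ e' → e' ∈ F)
    (hfirst : ∀ e ∈ p.edges.head?, e ∈ F) :
    ∀ e ∈ p.edges, e ∈ F := by
  induction p with
  | nil => simp
  | @cons a b c h q ih =>
    intro e he
    rw [Walk.edges_cons, List.mem_cons] at he
    have hab : s(a, b) ∈ F := hfirst _ (by simp)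
    rcases he with rfl | he
    · exact hab
    · refine ih ?_ ?_ e he
      · intro e1 he1 y hy e' he' hye'
        exact hstep e1 he1 y hy e' (by simp [he']) hye'
      · intro e2 he2
        obtain ⟨hb, hmem⟩ := head_edge_mem q he2
        exact hstep _ hab b (by simp) e2 (by simp [hmem]) hb

/-- If `F` is "edge-closed" along a closed walk `c` and all edges of `c` at some
vertex `x` of `c` belong to `F`, then all edges of `c` belong to `F`. -/
private lemma cycle_saturated {v : V} (c : G.Walk v v) (F : Finset (Sym2 V))
    (hstep : ∀ e ∈ F, ∀ y, y ∈ e → ∀ e' ∈ c.edges, y ∈ e' → e' ∈ F)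
    {x : V} (hx : x ∈ c.support) (hsat : ∀ e ∈ c.edges, x ∈ e → e ∈ F) :
    ∀ e ∈ c.edges, e ∈ F := by
  have hrot : ∀ e, e ∈ (c.rotate x hx).edges ↔ e ∈ c.edges := by
    intro e
    exact (c.rotate_edges x hx).mem_iff
  intro e he
  refine (prop_along (c.rotate x hx) F ?_ ?_) e ((hrot e).mpr he)
  · intro e1 he1 y hy e' he' hye'
    exact hstep e1 he1 y hy e' ((hrot e').mp he') hye'
  · intro e2 he2
    obtain ⟨hxe, hmem⟩ := head_edge_mem _ he2
    exact hsat e2 ((hrot e2).mp hmem) hxe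

/-- Each vertex is incident to at most `dropLast`-count + `tail`-count many edges. -/
private lemma countP_edges_le {u w : V} (p : G.Walk u w) (x : V) :
    (p.edges.filter (fun e => x ∈ e)).length
      ≤ p.support.dropLast.count x + p.support.tail.count x := by
  induction p with
  | nil => simp
  | @cons a b c h q ih =>
    have hab : a ≠ b := h.ne
    rw [Walk.edges_cons, Walk.support_cons,
      List.dropLast_cons_of_ne_nil q.support_ne_nil, List.tail_cons, List.filter_cons,
      count_cons']
    have hcount : q.support.count x = q.support.tail.count x + (if x = b then 1 else 0) := by
      conv_lhs => rw [q.support_eq_cons]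
      rw [count_cons']
    rw [hcount]
    by_cases hxa : x = a <;> by_cases hxb : x = b
    · exact absurd (hxa ▸ hxb) hab
    · rw [if_pos (by simp [hxa]), if_pos hxa, if_neg hxb, List.length_cons]
      omega
    · rw [if_pos (by simp [hxb]), if_neg hxa, if_pos hxb, List.length_cons]
      omega
    · rw [if_neg (by simp [hxa, hxb]), if_neg hxa, if_neg hxb]
      omega


private lemma getLast_of_cons {α : Type*} (v : α) (t : List α) (ht : t ≠ [])
    (h : (v :: t).getLast? = some v) : t.getLast ht = v := by
  cases t with
  | nil => exact absurd rfl ht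
  | cons a l =>
    rw [List.getLast?_cons_cons] at h
    have hv : v ∈ (a :: l).getLast? := h ▸ rfl
    obtain ⟨hh, heq⟩ := List.mem_getLast?_eq_getLast hv
    exact heq.symm

private lemma end_mem_tail {v : V} (c : G.Walk v v) (htne : c.support.tail ≠ []) :
    c.support.tail.getLast htne = v := by
  have h1 : c.support.getLast? = some v := by
    rw [List.getLast?_eq_getLast_of_ne_nil (by simp), c.getLast_support]
  rw [c.support_eq_cons] at h1
  exact getLast_of_cons v _ htne h1

/-- In a cycle, every vertex is incident to at most two edges of the cycle. -/
private lemma cycle_incidence_le_two {v : V} (c : G.Walk v v) (hc : c.IsCycle) (x : V) :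
    (c.edges.toFinset.filter (fun e => x ∈ e)).card ≤ 2 := by
  have hnd : c.edges.Nodup := hc.isCircuit.isTrail.edges_nodup
  have htail : c.support.tail.Nodup := hc.support_nodup
  have hlen3 : 3 ≤ c.length := hc.three_le_length
  have htne : c.support.tail ≠ [] := by
    have hl : c.support.tail.length = c.length := by
      rw [List.length_tail, SimpleGraph.Walk.length_support]; omega
    intro h
    rw [h] at hl
    simp at hl
    omega
  -- the Finset filter card equals the list filter length
  have hcard : (c.edges.toFinset.filter (fun e => x ∈ e)).card
      = (c.edges.filter (fun e => x ∈ e)).length := by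
    have h0 : c.edges.toFinset.filter (fun e => x ∈ e)
        = (c.edges.filter (fun e => x ∈ e)).toFinset := by
      ext e; simp [List.mem_filter]
    rw [h0, List.toFinset_card_of_nodup (hnd.filter _)]
  rw [hcard]
  refine le_trans (countP_edges_le c x) ?_
  -- bound the two counts by 1 each
  have hgl : c.support.tail.getLast htne = v := end_mem_tail c htne
  have hvd : v ∉ c.support.tail.dropLast := by
    intro hv
    have hsplit := List.dropLast_append_getLast htne
    rw [hgl] at hsplit
    have := htail
    rw [← hsplit, List.nodup_append] at this
    exact this.2.2 v hv v (by simp) rfl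
  have h2 : c.support.tail.count x ≤ 1 := List.nodup_iff_count_le_one.mp htail x
  have h3 : c.support.dropLast.count x ≤ 1 := by
    have hdl : c.support.dropLast = v :: c.support.tail.dropLast := by
      conv_lhs => rw [c.support_eq_cons]
      rw [List.dropLast_cons_of_ne_nil htne]
    rw [hdl, count_cons']
    have hnd2 : c.support.tail.dropLast.Nodup := (List.dropLast_sublist _).nodup htail
    by_cases hxv : x = v
    · rw [if_pos hxv, hxv, List.count_eq_zero_of_not_mem hvd]
    · rw [if_neg hxv]
      have := List.nodup_iff_count_le_one.mp hnd2 x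
      omega
  omega

/-- A cycle of length `n` has exactly `n` distinct vertices. -/
private lemma cycle_card_support {v : V} (c : G.Walk v v) (hc : c.IsCycle) :
    c.support.toFinset.card = c.length := by
  have htail : c.support.tail.Nodup := hc.support_nodup
  have hlen3 : 3 ≤ c.length := hc.three_le_length
  have hlt : c.support.tail.length = c.length := by
    rw [List.length_tail, SimpleGraph.Walk.length_support]; omega
  have htne : c.support.tail ≠ [] := by
    intro h; rw [h] at hlt; simp at hlt; omega
  have hgl : c.support.tail.getLast htne = v := end_mem_tail c htne
  have hv : v ∈ c.support.tail := by
    have := List.getLast_mem htne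
    rwa [hgl] at this
  have : c.support.toFinset = c.support.tail.toFinset := by
    conv_lhs => rw [c.support_eq_cons]
    rw [List.toFinset_cons]
    exact Finset.insert_eq_self.mpr (List.mem_toFinset.mpr hv)
  rw [this, List.toFinset_card_of_nodup htail, hlt]

/-- Double counting: summing vertex degrees over a set containing all endpoints. -/
private lemma sum_deg_eq (A : Finset V) (F : Finset (Sym2 V))
    (hend : ∀ e ∈ F, ∀ x, x ∈ e → x ∈ A) (hnd : ∀ e ∈ F, ¬ e.IsDiag) :
    ∑ x ∈ A, (F.filter (fun e => x ∈ e)).card = 2 * F.card := by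
  have h1 : ∀ x ∈ A, (F.filter (fun e => x ∈ e)).card
      = ∑ e ∈ F, (if x ∈ e then 1 else 0) := by
    intro x _
    rw [Finset.card_filter]
  rw [Finset.sum_congr rfl h1, Finset.sum_comm]
  have h2 : ∀ e ∈ F, ∑ x ∈ A, (if x ∈ e then 1 else 0) = 2 := by
    intro e he
    rw [← Finset.card_filter]
    induction e using Sym2.ind with
    | _ a b =>
      have hab : a ≠ b := by
        intro h; exact hnd _ he (by simp [h, Sym2.mk_isDiag_iff])
      have ha : a ∈ A := hend _ he a (by simp)
      have hb : b ∈ A := hend _ he b (by simp)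
      have : A.filter (fun x => x ∈ s(a, b)) = {a, b} := by
        ext y
        simp only [Finset.mem_filter, Sym2.mem_iff, Finset.mem_insert, Finset.mem_singleton]
        constructor
        · rintro ⟨_, h⟩; exact h
        · rintro (rfl | rfl) <;> simp [ha, hb]
      rw [this, Finset.card_pair hab]
  rw [Finset.sum_congr rfl h2, Finset.sum_const, smul_eq_mul, mul_comm]

end Aux

/-- (Intersecting short cycles give a dense subset.)  Let `G` be a finite simple graph
and `L ≥ 3`.  If `G` contains two distinct cycles (cycles with different edge sets),
each of length at most `L`, sharing at least one vertex, then there is a vertex set `S`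
with `|S| ≤ 2L` spanning at least `|S| + 1` edges of `G`. -/
theorem dense_subset_of_intersecting_cycles {V : Type*} [Fintype V] [DecidableEq V]
    (G : SimpleGraph V) (L : ℕ) (hL : 3 ≤ L) (v1 v2 : V)
    (c1 : G.Walk v1 v1) (c2 : G.Walk v2 v2) (h1 : c1.IsCycle) (h2 : c2.IsCycle)
    (hl1 : c1.length ≤ L) (hl2 : c2.length ≤ L)
    (hne : c1.edges.toFinset ≠ c2.edges.toFinset)
    (hshare : ∃ x : V, x ∈ c1.support ∧ x ∈ c2.support) :
    ∃ S : Finset V, S.card ≤ 2 * L ∧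
      S.card + 1 ≤ {e : Sym2 V | e ∈ G.edgeSet ∧ ∀ x ∈ e, x ∈ S}.ncard := by
  classical
  set E1 : Finset (Sym2 V) := c1.edges.toFinset with hE1
  set E2 : Finset (Sym2 V) := c2.edges.toFinset with hE2
  set V1 : Finset V := c1.support.toFinset with hV1
  set V2 : Finset V := c2.support.toFinset with hV2
  set S : Finset V := V1 ∪ V2 with hS
  set A : Finset V := V1 ∩ V2 with hA
  set F : Finset (Sym2 V) := E1 ∩ E2 with hF
  obtain ⟨x0, hx01, hx02⟩ := hshare
  have hx0A : x0 ∈ A := Finset.mem_inter.mpr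
    ⟨List.mem_toFinset.mpr hx01, List.mem_toFinset.mpr hx02⟩
  -- endpoints of edges of F lie in A
  have hendA : ∀ e ∈ F, ∀ y, y ∈ e → y ∈ A := by
    intro e he y hy
    obtain ⟨he1, he2⟩ := Finset.mem_inter.mp he
    exact Finset.mem_inter.mpr
      ⟨List.mem_toFinset.mpr (mem_support_of_mem_edges' c1 (List.mem_toFinset.mp he1) hy),
       List.mem_toFinset.mpr (mem_support_of_mem_edges' c2 (List.mem_toFinset.mp he2) hy)⟩
  have hFnd : ∀ e ∈ F, ¬ e.IsDiag := by
    intro e he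
    have : e ∈ G.edgeSet :=
      c1.edges_subset_edgeSet (List.mem_toFinset.mp (Finset.mem_inter.mp he).1)
    exact G.not_isDiag_of_mem_edgeSet this
  -- key inequality : |F| + 1 ≤ |A|
  have hkey : F.card + 1 ≤ A.card := by
    by_contra hcon
    push_neg at hcon
    have hAF : A.card ≤ F.card := by omega
    -- all degrees in A equal 2
    have hdegle : ∀ x ∈ A, (F.filter (fun e => x ∈ e)).card ≤ 2 := by
      intro x _
      refine le_trans (Finset.card_le_card
        (Finset.filter_subset_filter _ (Finset.inter_subset_left))) ?_
      exact cycle_incidence_le_two c1 h1 x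
    have hsum := sum_deg_eq A F hendA hFnd
    have hall : ∀ x ∈ A, (F.filter (fun e => x ∈ e)).card = 2 := by
      by_contra hc
      push_neg at hc
      obtain ⟨x1, hx1, hx1ne⟩ := hc
      have hlt : ∑ x ∈ A, (F.filter (fun e => x ∈ e)).card < ∑ _x ∈ A, 2 :=
        Finset.sum_lt_sum hdegle ⟨x1, hx1, lt_of_le_of_ne (hdegle x1 hx1) hx1ne⟩
      rw [hsum, Finset.sum_const, smul_eq_mul] at hlt
      omega
    -- saturation at every vertex of A, for both cycles
    have hsat : ∀ (w : V) (c : G.Walk w w), c.IsCycle →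
        (F ⊆ c.edges.toFinset) →
        ∀ x ∈ A, ∀ e ∈ c.edges, x ∈ e → e ∈ F := by
      intro w c hc hFc x hx e he hxe
      have heq : F.filter (fun e => x ∈ e) = c.edges.toFinset.filter (fun e => x ∈ e) :=
        Finset.eq_of_subset_of_card_le
          (Finset.filter_subset_filter _ hFc)
          (by rw [hall x hx]; exact cycle_incidence_le_two c hc x)
      have : e ∈ c.edges.toFinset.filter (fun e => x ∈ e) :=
        Finset.mem_filter.mpr ⟨List.mem_toFinset.mpr he, hxe⟩
      rw [← heq] at this
      exact (Finset.mem_filter.mp this).1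
    have hsat1 := hsat v1 c1 h1 Finset.inter_subset_left
    have hsat2 := hsat v2 c2 h2 Finset.inter_subset_right
    have hstep1 : ∀ e ∈ F, ∀ y, y ∈ e → ∀ e' ∈ c1.edges, y ∈ e' → e' ∈ F :=
      fun e he y hy => hsat1 y (hendA e he y hy)
    have hstep2 : ∀ e ∈ F, ∀ y, y ∈ e → ∀ e' ∈ c2.edges, y ∈ e' → e' ∈ F :=
      fun e he y hy => hsat2 y (hendA e he y hy)
    have hE1F : ∀ e ∈ c1.edges, e ∈ F :=
      cycle_saturated c1 F hstep1 hx01 (hsat1 x0 hx0A)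
    have hE2F : ∀ e ∈ c2.edges, e ∈ F :=
      cycle_saturated c2 F hstep2 hx02 (hsat2 x0 hx0A)
    apply hne
    ext e
    constructor
    · intro he
      exact (Finset.mem_inter.mp (hE1F e (List.mem_toFinset.mp he))).2
    · intro he
      exact (Finset.mem_inter.mp (hE2F e (List.mem_toFinset.mp he))).1
  -- cardinalities
  have hV1c : V1.card = c1.length := cycle_card_support c1 h1
  have hV2c : V2.card = c2.length := cycle_card_support c2 h2
  have hE1c : E1.card = c1.length := by
    rw [hE1, List.toFinset_card_of_nodup h1.isCircuit.isTrail.edges_nodup,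
      SimpleGraph.Walk.length_edges]
  have hE2c : E2.card = c2.length := by
    rw [hE2, List.toFinset_card_of_nodup h2.isCircuit.isTrail.edges_nodup,
      SimpleGraph.Walk.length_edges]
  have hUV : S.card + A.card = V1.card + V2.card := Finset.card_union_add_card_inter V1 V2
  have hUE : (E1 ∪ E2).card + F.card = E1.card + E2.card := Finset.card_union_add_card_inter E1 E2
  refine ⟨S, ?_, ?_⟩
  · calc S.card ≤ V1.card + V2.card := Finset.card_union_le V1 V2
      _ ≤ 2 * L := by rw [hV1c, hV2c]; omega
  · -- the spanned edge set contains E1 ∪ E2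
    have hsub : ((E1 ∪ E2 : Finset (Sym2 V)) : Set (Sym2 V))
        ⊆ {e : Sym2 V | e ∈ G.edgeSet ∧ ∀ x ∈ e, x ∈ S} := by
      intro e he
      rw [Finset.mem_coe, Finset.mem_union] at he
      rcases he with he | he
      · refine ⟨c1.edges_subset_edgeSet (List.mem_toFinset.mp he), fun x hx => ?_⟩
        exact Finset.mem_union_left _
          (List.mem_toFinset.mpr (mem_support_of_mem_edges' c1 (List.mem_toFinset.mp he) hx))
      · refine ⟨c2.edges_subset_edgeSet (List.mem_toFinset.mp he), fun x hx => ?_⟩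
        exact Finset.mem_union_right _
          (List.mem_toFinset.mpr (mem_support_of_mem_edges' c2 (List.mem_toFinset.mp he) hx))
    have hncard : (E1 ∪ E2).card ≤ {e : Sym2 V | e ∈ G.edgeSet ∧ ∀ x ∈ e, x ∈ S}.ncard := by
      rw [← Set.ncard_coe_finset]
      exact Set.ncard_le_ncard hsub (Set.toFinite _)
    have : S.card + 1 ≤ (E1 ∪ E2).card := by omega
    omega
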